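/- arXiv:1702.06939 — 2 statements merged into one kernel-verified Lean document; each statement's English description precedes it below -/
import Mathlib

section
/- Let d > 0, θ̄ ∈ [0, π), ρ₊, ρ₋ ≥ 0 and let f̄ be the equilibrium profile built from the generalized von Mises density M_θ̄. Then the nematic current of f̄ satisfies J_{f̄} := ∫_{−π}^{π} (cos 2θ, sin 2θ) f̄(θ) dθ = (ρ₊ + ρ₋) · ⟨cos 2θ⟩_M · (cos 2θ̄, sin 2θ̄), where ⟨cos 2θ⟩_M = (∫₀^{π/2} cos(2θ) e^{−1/(d cos θ)} dθ)/(∫₀^{π/2} e^{−1/(d cos θ)} dθ). In particular the nematic current of every equilibrium points in the nematic direction (cos 2θ̄, sin 2θ̄). -/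
open Real MeasureTheory Set

/-- Normalization constant of the generalized von Mises distribution. -/
noncomputable def Zd (d : ℝ) : ℝ := ∫ θ in (-(π/2))..(π/2), exp (-1 / (d * cos θ))

/-- Generalized von Mises density with nematic mean direction `θb`. -/
noncomputable def GVM (d θb θ : ℝ) : ℝ := (1 / Zd d) * exp (-1 / (d * |cos (θ - θb)|))

/-- Equilibrium profile of the nematic alignment operator. -/
noncomputable def fbar (d θb ρp ρm θ : ℝ) : ℝ :=
  if 0 < cos (θ - θb) then ρp * GVM d θb θ
  else if cos (θ - θb) < 0 then ρm * GVM d θb θ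
  else 0

/-- Generalized von Mises average of a function `φ` on `[0, π/2)`. -/
noncomputable def gvmAvg (d : ℝ) (φ : ℝ → ℝ) : ℝ :=
  (∫ θ in (0:ℝ)..(π/2), φ θ * exp (-1 / (d * cos θ))) /
    (∫ θ in (0:ℝ)..(π/2), exp (-1 / (d * cos θ)))

/-!
Rotating by `θb` (both the profile and `cos 2θ`, `sin 2θ` are `2π`-periodic) reduces the current
to that of the profile centred at `0`. That profile is even, so its `sin 2θ` moment vanishes.
Its `cos 2θ` moment folds onto `[0, π/2]` by `θ ↦ -θ` and `θ ↦ π - θ`; the latter exchanges the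
`ρp` and `ρm` lobes and preserves `cos 2θ`, giving
`(ρp + ρm) / Zd d · ∫₀^{π/2} cos 2θ e^{-1/(d cos θ)}`, and `Zd d` is twice the denominator of
`gvmAvg` by the same evenness.
-/

namespace intervalIntegral

variable {g : ℝ → ℝ}

theorem integral_neg_to_eq_zero_of_odd (hg : ∀ x, g (-x) = -g x) (a : ℝ) :
    ∫ x in -a..a, g x = 0 := by
  have h := integral_comp_neg (a := -a) (b := a) g
  simp only [hg, integral_neg, neg_neg] at h
  linarith

theorem integral_neg_to_eq_two_mul_of_even (hg : ∀ x, g (-x) = g x) {a : ℝ}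
    (hi : IntervalIntegrable g volume (-a) a) :
    ∫ x in -a..a, g x = 2 * ∫ x in 0..a, g x := by
  have hmem : (0 : ℝ) ∈ uIcc (-a) a := by
    rw [mem_uIcc]; rcases le_total 0 a with h | h <;> [left; right] <;> constructor <;> linarith
  have h := integral_comp_neg (a := 0) (b := a) g
  simp only [hg, neg_zero] at h
  rw [← integral_add_adjacent_intervals (hi.mono_set (uIcc_subset_uIcc_left hmem))
    (hi.mono_set (uIcc_subset_uIcc_right hmem)), ← h]
  ring

theorem integral_zero_to_eq_add_comp_sub_left {b : ℝ} (hi : IntervalIntegrable g volume 0 b) :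
    ∫ x in 0..b, g x = (∫ x in 0..b / 2, g x) + ∫ x in 0..b / 2, g (b - x) := by
  have hmem : b / 2 ∈ uIcc 0 b := by
    rw [mem_uIcc]; rcases le_total 0 b with h | h <;> [left; right] <;> constructor <;> linarith
  rw [integral_comp_sub_left, sub_zero, show b - b / 2 = b / 2 by ring,
    integral_add_adjacent_intervals (hi.mono_set (uIcc_subset_uIcc_left hmem))
      (hi.mono_set (uIcc_subset_uIcc_right hmem))]

end intervalIntegral

theorem Function.Periodic.intervalIntegral_comp_add_right {f : ℝ → ℝ} {T : ℝ}
    (hf : Function.Periodic f T) (t c : ℝ) :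
    ∫ x in t..t + T, f (x + c) = ∫ x in t..t + T, f x := by
  rw [intervalIntegral.integral_comp_add_right, add_right_comm, hf.intervalIntegral_add_eq]

theorem exp_neg_one_div_le_one {x : ℝ} (hx : 0 ≤ x) : exp (-1 / x) ≤ 1 :=
  exp_le_one_iff.2 (div_nonpos_of_nonpos_of_nonneg (by norm_num) hx)

section Profile

variable {d : ℝ} (θb ρp ρm : ℝ)

theorem fbar_add_mean (u : ℝ) : fbar d θb ρp ρm (u + θb) = fbar d 0 ρp ρm u := by
  simp [fbar, GVM]

theorem fbar_periodic : Function.Periodic (fbar d θb ρp ρm) (2 * π) := fun θ => by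
  simp [fbar, GVM, sub_eq_add_neg, add_right_comm θ (2 * π)]

theorem fbar_zero_neg (u : ℝ) : fbar d 0 ρp ρm (-u) = fbar d 0 ρp ρm u := by
  simp [fbar, GVM]

variable {θb ρp ρm} in
theorem fbar_zero_of_cos_pos {x : ℝ} (hx : 0 < cos x) :
    fbar d 0 ρp ρm x = ρp / Zd d * exp (-1 / (d * cos x)) := by
  simp only [fbar, GVM, sub_zero, if_pos hx, abs_of_pos hx]
  ring

variable {θb ρp ρm} in
theorem fbar_zero_pi_sub_of_cos_pos {x : ℝ} (hx : 0 < cos x) :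
    fbar d 0 ρp ρm (π - x) = ρm / Zd d * exp (-1 / (d * cos x)) := by
  have hneg : -cos x < 0 := neg_lt_zero.2 hx
  simp only [fbar, GVM, sub_zero, cos_pi_sub, if_neg (lt_asymm hneg), if_pos hneg, abs_neg,
    abs_of_pos hx]
  ring

theorem measurable_fbar : Measurable (fbar d θb ρp ρm) := by
  unfold fbar GVM
  refine Measurable.ite (measurableSet_lt measurable_const (by fun_prop)) (by fun_prop) ?_
  exact Measurable.ite (measurableSet_lt (by fun_prop) measurable_const) (by fun_prop)
    measurable_const

theorem abs_GVM_le (hd : 0 ≤ d) (θ : ℝ) : |GVM d θb θ| ≤ |1 / Zd d| := by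
  rw [GVM, abs_mul, abs_of_pos (exp_pos _)]
  exact mul_le_of_le_one_right (abs_nonneg _)
    (exp_neg_one_div_le_one (mul_nonneg hd (abs_nonneg _)))

theorem abs_fbar_le (hd : 0 ≤ d) (θ : ℝ) :
    |fbar d θb ρp ρm θ| ≤ (|ρp| + |ρm|) * |1 / Zd d| := by
  have hG := abs_GVM_le θb hd θ
  unfold fbar
  split_ifs
  · rw [abs_mul]; exact mul_le_mul (by linarith [abs_nonneg ρm]) hG (abs_nonneg _) (by positivity)
  · rw [abs_mul]; exact mul_le_mul (by linarith [abs_nonneg ρp]) hG (abs_nonneg _) (by positivity)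
  · simpa using by positivity

theorem intervalIntegrable_fbar (hd : 0 ≤ d) (a b : ℝ) :
    IntervalIntegrable (fbar d θb ρp ρm) volume a b :=
  intervalIntegrable_const.mono_fun' (measurable_fbar θb ρp ρm).aestronglyMeasurable
    (ae_of_all _ (abs_fbar_le θb ρp ρm hd))

end Profile

section Integrals

open intervalIntegral

variable {d : ℝ}

theorem intervalIntegrable_exp_neg_one_div_mul_cos (hd : 0 ≤ d) :
    IntervalIntegrable (fun θ => exp (-1 / (d * cos θ))) volume (-(π / 2)) (π / 2) := by
  refine (intervalIntegrable_const (c := 1)).mono_fun'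
    (by fun_prop : Measurable _).aestronglyMeasurable ?_
  rw [Filter.EventuallyLE, ae_restrict_iff' measurableSet_uIoc]
  refine ae_of_all _ fun θ hθ => ?_
  rw [uIoc_of_le (by linarith [pi_pos])] at hθ
  rw [Real.norm_of_nonneg (exp_pos _).le]
  exact exp_neg_one_div_le_one (mul_nonneg hd (cos_nonneg_of_mem_Icc (Ioc_subset_Icc_self hθ)))

theorem Zd_eq_two_mul (hd : 0 ≤ d) :
    Zd d = 2 * ∫ θ in 0..π / 2, exp (-1 / (d * cos θ)) :=
  integral_neg_to_eq_two_mul_of_even (fun θ => by rw [cos_neg])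
    (intervalIntegrable_exp_neg_one_div_mul_cos hd)

variable (ρp ρm : ℝ)

theorem integral_sin_two_mul_mul_fbar_zero :
    ∫ u in -π..π, sin (2 * u) * fbar d 0 ρp ρm u = 0 :=
  integral_neg_to_eq_zero_of_odd (fun u => by rw [fbar_zero_neg, mul_neg, sin_neg, neg_mul]) π

theorem integral_cos_two_mul_mul_fbar_zero (hd : 0 ≤ d) :
    ∫ u in -π..π, cos (2 * u) * fbar d 0 ρp ρm u
      = (ρp + ρm) * gvmAvg d (fun θ => cos (2 * θ)) := by
  have hi : ∀ a b, IntervalIntegrable (fun u => cos (2 * u) * fbar d 0 ρp ρm u) volume a b :=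
    fun a b => (intervalIntegrable_fbar 0 ρp ρm hd a b).continuousOn_mul (by fun_prop)
  -- Only on the open interval: at `π / 2` the weight `exp (-1 / (d * cos x))` is `exp 0 = 1`.
  have hplus : ∫ x in 0..π / 2, cos (2 * x) * fbar d 0 ρp ρm x
      = ρp / Zd d * ∫ x in 0..π / 2, cos (2 * x) * exp (-1 / (d * cos x)) := by
    rw [← intervalIntegral.integral_const_mul]
    refine integral_congr_Ioo_of_le (by positivity) fun x hx => ?_
    have hcos := cos_pos_of_mem_Ioo ⟨by linarith [hx.1, pi_pos], hx.2⟩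
    simp only [fbar_zero_of_cos_pos hcos]
    ring
  have hminus : ∫ x in 0..π / 2, cos (2 * (π - x)) * fbar d 0 ρp ρm (π - x)
      = ρm / Zd d * ∫ x in 0..π / 2, cos (2 * x) * exp (-1 / (d * cos x)) := by
    rw [← intervalIntegral.integral_const_mul]
    refine integral_congr_Ioo_of_le (by positivity) fun x hx => ?_
    have hcos := cos_pos_of_mem_Ioo ⟨by linarith [hx.1, pi_pos], hx.2⟩
    simp only [fbar_zero_pi_sub_of_cos_pos hcos, mul_sub, cos_sub, cos_two_pi, sin_two_pi]
    ring
  rw [integral_neg_to_eq_two_mul_of_even (fun u => by rw [fbar_zero_neg, mul_neg, cos_neg])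
      (hi _ _),
    integral_zero_to_eq_add_comp_sub_left (hi _ _), hplus, hminus, gvmAvg, Zd_eq_two_mul hd]
  ring

end Integrals

theorem integral_mul_fbar {d : ℝ} (θb ρp ρm : ℝ) {g : ℝ → ℝ} (hg : Function.Periodic g (2 * π)) :
    ∫ θ in -π..π, g θ * fbar d θb ρp ρm θ = ∫ u in -π..π, g (u + θb) * fbar d 0 ρp ρm u := by
  have h := (hg.mul (fbar_periodic (d := d) θb ρp ρm)).intervalIntegral_comp_add_right (-π) θb
  rw [show -π + 2 * π = π by ring] at h
  simp only [Pi.mul_apply, fbar_add_mean] at h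
  exact h.symm

section Rotation

open intervalIntegral

variable {F : ℝ → ℝ} {a b : ℝ}

theorem periodic_cos_two_mul : Function.Periodic (fun θ => cos (2 * θ)) (2 * π) := fun θ => by
  simp only [mul_add]; exact_mod_cast cos_add_nat_mul_two_pi (2 * θ) 2

theorem periodic_sin_two_mul : Function.Periodic (fun θ => sin (2 * θ)) (2 * π) := fun θ => by
  simp only [mul_add]; exact_mod_cast sin_add_nat_mul_two_pi (2 * θ) 2

theorem integral_cos_two_mul_add_mul (hF : IntervalIntegrable F volume a b) (c : ℝ) :
    ∫ u in a..b, cos (2 * (u + c)) * F u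
      = cos (2 * c) * (∫ u in a..b, cos (2 * u) * F u)
        - sin (2 * c) * ∫ u in a..b, sin (2 * u) * F u := by
  simp only [mul_add, cos_add, sub_mul, mul_right_comm _ (cos (2 * c)),
    mul_right_comm _ (sin (2 * c))]
  rw [integral_sub ((hF.continuousOn_mul (by fun_prop)).mul_const _)
    ((hF.continuousOn_mul (by fun_prop)).mul_const _), intervalIntegral.integral_mul_const,
    intervalIntegral.integral_mul_const]
  ring

theorem integral_sin_two_mul_add_mul (hF : IntervalIntegrable F volume a b) (c : ℝ) :
    ∫ u in a..b, sin (2 * (u + c)) * F u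
      = sin (2 * c) * (∫ u in a..b, cos (2 * u) * F u)
        + cos (2 * c) * ∫ u in a..b, sin (2 * u) * F u := by
  simp only [mul_add, sin_add, add_mul, mul_right_comm _ (cos (2 * c)),
    mul_right_comm _ (sin (2 * c))]
  rw [integral_add ((hF.continuousOn_mul (by fun_prop)).mul_const _)
    ((hF.continuousOn_mul (by fun_prop)).mul_const _), intervalIntegral.integral_mul_const,
    intervalIntegral.integral_mul_const]
  ring

end Rotation

theorem equilibrium_nematic_current_general
    (d : ℝ) (hd : 0 < d) (θb : ℝ)
    (ρp ρm : ℝ) :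
    (∫ θ in (-π)..π, cos (2*θ) * fbar d θb ρp ρm θ)
        = (ρp + ρm) * gvmAvg d (fun θ => cos (2*θ)) * cos (2*θb) ∧
    (∫ θ in (-π)..π, sin (2*θ) * fbar d θb ρp ρm θ)
        = (ρp + ρm) * gvmAvg d (fun θ => cos (2*θ)) * sin (2*θb) := by
  have hF := intervalIntegrable_fbar 0 ρp ρm hd.le (-π) π
  rw [integral_mul_fbar θb ρp ρm periodic_cos_two_mul, integral_cos_two_mul_add_mul hF,
    integral_mul_fbar θb ρp ρm periodic_sin_two_mul, integral_sin_two_mul_add_mul hF,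
    integral_cos_two_mul_mul_fbar_zero ρp ρm hd.le, integral_sin_two_mul_mul_fbar_zero]
  constructor <;> ring

/-- The nematic current of the equilibrium profile equals
`(ρp + ρm) · ⟨cos 2θ⟩_M · (cos 2θb, sin 2θb)`: it points in the nematic direction. -/
theorem equilibrium_nematic_current
    (d : ℝ) (hd : 0 < d) (θb : ℝ) (hθb : θb ∈ Ico 0 π)
    (ρp ρm : ℝ) (hρp : 0 ≤ ρp) (hρm : 0 ≤ ρm) :
    (∫ θ in (-π)..π, cos (2*θ) * fbar d θb ρp ρm θ)
        = (ρp + ρm) * gvmAvg d (fun θ => cos (2*θ)) * cos (2*θb) ∧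
    (∫ θ in (-π)..π, sin (2*θ) * fbar d θb ρp ρm θ)
        = (ρp + ρm) * gvmAvg d (fun θ => cos (2*θ)) * sin (2*θb) :=
  equilibrium_nematic_current_general d hd θb ρp ρm
end

section
/- Let d > 0, θ̄ ∈ [0, π), and let f be any function differentiable at a point θ with cos(θ − θ̄) ≠ 0. Then the alignment flux admits the divergence (weighted-gradient) form: Sign(cos(θ − θ̄))·sin(θ − θ̄)·f(θ) + d·cos²(θ − θ̄)·f′(θ) = d·cos²(θ − θ̄)·M_θ̄(θ)·(d/dθ)(f/M_θ̄)(θ), where Sign(a) = 1 if a > 0 and −1 if a < 0. In particular the nematic alignment operator Q_al(f) = ∂_θ[Sign(cos(θ−θ̄)) sin(θ−θ̄) f + d cos²(θ−θ̄) ∂_θ f] can be written as ∂_θ[d cos²(θ−θ̄) M_θ̄ ∂_θ(f/M_θ̄)] away from cos(θ − θ̄) = 0. -/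
/-!
Away from the zeros of `cos (θ - θ̄)` the density `M = Z⁻¹ exp (-1 / (d |cos (θ - θ̄)|))` is smooth,
and since `|cos|' = Sign (cos) · (-sin)` its logarithmic derivative is
`M' / M = -Sign (cos (θ - θ̄)) sin (θ - θ̄) / (d cos² (θ - θ̄))`. Hence `d cos² M'` equals `-Sign · sin · M`,
and expanding `M (f / M)' = f' - f M' / M` by the quotient rule turns the right-hand side into the flux.
-/

open Real MeasureTheory Set

/-- Sign function: 1 for positive, -1 otherwise. -/
noncomputable def Sign (a : ℝ) : ℝ := if 0 < a then 1 else -1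

lemma Sign_eq_sign {a : ℝ} (ha : a ≠ 0) : Sign a = SignType.sign a := by
  rcases ha.lt_or_gt with ha | ha
  · simp [Sign, ha.not_gt, ha]
  · simp [Sign, ha]

lemma Zd_pos {d : ℝ} (hd : 0 < d) : 0 < Zd d := by
  have hab : -(π/2) < π/2 := by linarith [pi_pos]
  -- On `[-π/2, π/2]` the exponent is nonpositive, so the integrand is bounded by `1`.
  have hle : ∀ᵐ θ ∂volume.restrict (uIoc (-(π/2)) (π/2)), ‖exp (-1 / (d * cos θ))‖ ≤ 1 := by
    filter_upwards [ae_restrict_mem measurableSet_uIoc] with θ hθ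
    rw [uIoc_of_le hab.le] at hθ
    have hcos : 0 ≤ cos θ := cos_nonneg_of_mem_Icc ⟨hθ.1.le, hθ.2⟩
    rw [Real.norm_of_nonneg (exp_pos _).le, exp_le_one_iff]
    exact div_nonpos_of_nonpos_of_nonneg (by norm_num) (by positivity)
  have hint : IntervalIntegrable (fun θ => exp (-1 / (d * cos θ))) volume (-(π/2)) (π/2) :=
    intervalIntegrable_const.mono_fun' (Measurable.aestronglyMeasurable (by fun_prop)) hle
  exact intervalIntegral.intervalIntegral_pos_of_pos_on hint (fun _ _ => exp_pos _) hab

lemma GVM_pos {d : ℝ} (hd : 0 < d) (θb θ : ℝ) : 0 < GVM d θb θ :=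
  mul_pos (one_div_pos.mpr (Zd_pos hd)) (exp_pos _)

lemma hasDerivAt_GVM {d θb θ : ℝ} (hd : d ≠ 0) (hc : cos (θ - θb) ≠ 0) :
    HasDerivAt (GVM d θb)
      (-(Sign (cos (θ - θb)) * sin (θ - θb)) / (d * cos (θ - θb) ^ 2) * GVM d θb θ) θ := by
  have hcos : HasDerivAt (fun t => cos (t - θb)) (-sin (θ - θb)) θ := by
    simpa using ((hasDerivAt_id θ).sub_const θb).cos
  have habs : HasDerivAt (fun t => d * |cos (t - θb)|)
      (d * (SignType.sign (cos (θ - θb)) * -sin (θ - θb))) θ :=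
    (HasDerivAt.comp θ (hasDerivAt_abs hc) hcos).const_mul d
  have hexp :=
    ((habs.fun_inv (mul_ne_zero hd (abs_ne_zero.mpr hc))).fun_neg.exp).const_mul (1 / Zd d)
  have hGVM : GVM d θb = fun t => 1 / Zd d * exp (-(d * |cos (t - θb)|)⁻¹) := by
    funext t
    simp only [GVM, neg_div, one_div]
  rw [hGVM]
  refine hexp.congr_deriv ?_
  rw [Sign_eq_sign hc, mul_pow, sq_abs]
  field_simp

theorem alignment_flux_divergence_form_general
    (d : ℝ) (hd : 0 < d) (θb : ℝ)
    (f : ℝ → ℝ) (θ : ℝ) (hf : DifferentiableAt ℝ f θ) (hc : cos (θ - θb) ≠ 0) :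
    Sign (cos (θ - θb)) * sin (θ - θb) * f θ + d * cos (θ - θb) ^ 2 * deriv f θ
      = d * cos (θ - θb) ^ 2 * GVM d θb θ * deriv (fun t => f t / GVM d θb t) θ := by
  have hM := GVM_pos hd θb θ
  rw [(hf.hasDerivAt.fun_div (hasDerivAt_GVM hd.ne' hc) hM.ne').deriv]
  field_simp
  ring

/-- The alignment flux admits the divergence (weighted-gradient) form: away from
`cos (θ - θ̄) = 0`, for any `f` differentiable at `θ`,
`Sign(cos(θ−θ̄)) sin(θ−θ̄) f + d cos²(θ−θ̄) f′ = d cos²(θ−θ̄) M_θ̄ (f/M_θ̄)′`. -/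
theorem alignment_flux_divergence_form
    (d : ℝ) (hd : 0 < d) (θb : ℝ) (hθb : θb ∈ Ico 0 π)
    (f : ℝ → ℝ) (θ : ℝ) (hf : DifferentiableAt ℝ f θ) (hc : cos (θ - θb) ≠ 0) :
    Sign (cos (θ - θb)) * sin (θ - θb) * f θ + d * cos (θ - θb) ^ 2 * deriv f θ
      = d * cos (θ - θb) ^ 2 * GVM d θb θ * deriv (fun t => f t / GVM d θb t) θ :=
  alignment_flux_divergence_form_general d hd θb f θ hf hc
end
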